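/- Let κ ∈ [0,1] and let W̃ be a d×d complex matrix with a singular value decomposition W̃ = U·Σ·V†, with singular values σ_1, …, σ_d (the diagonal entries of Σ). Define W = U·Σ'·V†, where Σ' is the diagonal matrix with σ'_i = 1 if σ_i ∈ [1−κ, 1+κ] and σ'_i = σ_i otherwise. Then ‖W − W̃‖∞ ≤ κ, and W†W·v = v for every vector v in the span of those columns of V whose index i satisfies σ_i ∈ [1−κ, 1+κ]. -/

import Mathlib

open scoped Matrix Kronecker ComplexOrder

/-- The operator (spectral) norm of a square complex matrix. -/
noncomputable def opNorm {n : Type*} [Fintype n] [DecidableEq n] (A : Matrix n n ℂ) : ℝ :=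
  ‖Matrix.toEuclideanCLM (𝕜 := ℂ) A‖

/-- The square root of a positive semidefinite matrix (Mathlib's definition of Dec 2024). -/
noncomputable def Matrix.PosSemidef.sqrt {n : Type*} [Fintype n] [DecidableEq n] {A : Matrix n n ℂ}
    (hA : A.PosSemidef) : Matrix n n ℂ :=
  (hA.1.eigenvectorUnitary : Matrix n n ℂ) *
    Matrix.diagonal ((↑) ∘ (Real.sqrt ·) ∘ hA.1.eigenvalues) *
    (star hA.1.eigenvectorUnitary : Matrix n n ℂ)

/-- The trace norm `‖A‖₁ = Tr √(Aᴴ A)` of a square complex matrix. -/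
noncomputable def traceNorm {n : Type*} [Fintype n] [DecidableEq n] (A : Matrix n n ℂ) : ℝ :=
  ((Matrix.posSemidef_conjTranspose_mul_self A).sqrt.trace).re

/-- The (square-root) fidelity `F(ρ,σ) = ‖√ρ √σ‖₁` of positive semidefinite matrices. -/
noncomputable def fidelity {n : Type*} [Fintype n] [DecidableEq n] {ρ σ : Matrix n n ℂ}
    (hρ : ρ.PosSemidef) (hσ : σ.PosSemidef) : ℝ :=
  traceNorm (hρ.sqrt * hσ.sqrt)

/-- Functional calculus for a Hermitian matrix: `f(A) = Σ_i f(λ_i) |v_i⟩⟨v_i|`. -/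
noncomputable def matFun {n : Type*} [Fintype n] [DecidableEq n] {A : Matrix n n ℂ}
    (hA : A.IsHermitian) (f : ℝ → ℝ) : Matrix n n ℂ :=
  (hA.eigenvectorUnitary : Matrix n n ℂ) *
    Matrix.diagonal (fun i => (f (hA.eigenvalues i) : ℂ)) *
    (star (hA.eigenvectorUnitary : Matrix n n ℂ))

/-- Partial trace over the first tensor factor. -/
noncomputable def ptraceA {a b : Type*} [Fintype a] (X : Matrix (a × b) (a × b) ℂ) :
    Matrix b b ℂ :=
  Matrix.of fun i j => ∑ k, X (k, i) (k, j)

/-- Partial trace over the second tensor factor. -/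
noncomputable def ptraceB {a b : Type*} [Fintype b] (X : Matrix (a × b) (a × b) ℂ) :
    Matrix a a ℂ :=
  Matrix.of fun i j => ∑ k, X (i, k) (j, k)

/-- The outer product `|ψ⟩⟨φ|`. -/
def outer {a : Type*} (ψ φ : a → ℂ) : Matrix a a ℂ :=
  Matrix.of fun i j => ψ i * (starRingEnd ℂ) (φ j)

/-- The Euclidean norm of a finitely supported complex vector. -/
noncomputable def evnorm {a : Type*} [Fintype a] (v : a → ℂ) : ℝ :=
  Real.sqrt (∑ i, ‖v i‖ ^ 2)

/-!
`W − W̃ = U (Σ' − Σ) V†`, and the spectral norm is unitarily invariant, so `‖W − W̃‖∞` is the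
largest `|σ'ᵢ − σᵢ|`, which is at most `κ`. Likewise `W†W = V Σ'² V†` acts on the `i`-th column
of `V` as multiplication by `σ'ᵢ² = 1` whenever `σᵢ` was rounded.
-/

open scoped Matrix.Norms.L2Operator

theorem opNorm_eq_l2_opNorm {n : Type*} [Fintype n] [DecidableEq n] (A : Matrix n n ℂ) :
    opNorm A = ‖A‖ :=
  rfl

namespace Matrix

variable {𝕜 n : Type*} [RCLike 𝕜] [Fintype n] [DecidableEq n]

theorem l2_opNorm_unitary_mul_mul_conjTranspose {U V : Matrix n n 𝕜}
    (hU : U ∈ unitaryGroup n 𝕜) (hV : V ∈ unitaryGroup n 𝕜) (A : Matrix n n 𝕜) :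
    ‖U * A * Vᴴ‖ = ‖A‖ := by
  rw [← star_eq_conjTranspose, CStarRing.norm_mul_mem_unitary _ (Unitary.star_mem hV),
    CStarRing.norm_mem_unitary_mul _ hU]

theorem l2_opNorm_diagonal_le {δ : n → 𝕜} {κ : ℝ} (hκ : 0 ≤ κ) (hδ : ∀ i, ‖δ i‖ ≤ κ) :
    ‖diagonal δ‖ ≤ κ := by
  rw [l2_opNorm_diagonal]
  exact (pi_norm_le_iff_of_nonneg hκ).2 hδ

theorem conjTranspose_mul_self_svd {U V : Matrix n n 𝕜} (hU : U ∈ unitaryGroup n 𝕜)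
    (σ : n → 𝕜) :
    (U * diagonal σ * Vᴴ)ᴴ * (U * diagonal σ * Vᴴ) = V * diagonal (star σ * σ) * Vᴴ := by
  have hUU : Uᴴ * U = 1 := hU.1
  simp only [conjTranspose_mul, conjTranspose_conjTranspose, diagonal_conjTranspose, mul_assoc]
  rw [← mul_assoc Uᴴ, hUU, one_mul, ← mul_assoc (diagonal _), diagonal_mul_diagonal]
  rfl

theorem unitary_mul_diagonal_mul_conjTranspose_mulVec_col {V : Matrix n n 𝕜}
    (hV : V ∈ unitaryGroup n 𝕜) (μ : n → 𝕜) (i : n) :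
    (V * diagonal μ * Vᴴ) *ᵥ V.col i = μ i • V.col i := by
  have hVV : Vᴴ * V = 1 := hV.1
  rw [← mulVec_single_one, mulVec_mulVec, mul_assoc, mul_assoc, hVV, mul_one, ← mulVec_mulVec,
    diagonal_mulVec_single, ← mulVec_smul, ← Pi.single_smul', smul_eq_mul]

end Matrix

theorem norm_ite_one_sub_le {κ x : ℝ} (hκ : 0 ≤ κ) :
    ‖(if 1 - κ ≤ x ∧ x ≤ 1 + κ then (1 : ℂ) else (x : ℂ)) - x‖ ≤ κ := by
  split_ifs with h
  · rw [← Complex.ofReal_one, ← Complex.ofReal_sub, Complex.norm_real, Real.norm_eq_abs, abs_le]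
    constructor <;> linarith [h.1, h.2]
  · simpa using hκ

theorem round_singular_values_general (d : ℕ) (κ : ℝ) (hκ0 : 0 ≤ κ)
    (Wt U V : Matrix (Fin d) (Fin d) ℂ)
    (hU : U ∈ Matrix.unitaryGroup (Fin d) ℂ) (hV : V ∈ Matrix.unitaryGroup (Fin d) ℂ)
    (s : Fin d → ℝ)
    (hSVD : Wt = U * Matrix.diagonal (fun i => (s i : ℂ)) * Vᴴ)
    (W : Matrix (Fin d) (Fin d) ℂ)
    (hW : W = U * Matrix.diagonal
      (fun i => if 1 - κ ≤ s i ∧ s i ≤ 1 + κ then (1 : ℂ) else (s i : ℂ)) * Vᴴ) :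
    opNorm (W - Wt) ≤ κ ∧
      ∀ v ∈ Submodule.span ℂ
          ((fun i : Fin d => (fun j : Fin d => V j i)) '' {i | 1 - κ ≤ s i ∧ s i ≤ 1 + κ}),
        (Wᴴ * W) *ᵥ v = v := by
  subst hSVD hW
  refine ⟨?_, fun v hv => ?_⟩
  · rw [opNorm_eq_l2_opNorm, ← sub_mul, ← mul_sub, Matrix.diagonal_sub,
      Matrix.l2_opNorm_unitary_mul_mul_conjTranspose hU hV]
    exact Matrix.l2_opNorm_diagonal_le hκ0 fun _ => norm_ite_one_sub_le hκ0
  · refine LinearMap.eqOn_span (f := Matrix.mulVecLin _) (g := LinearMap.id) ?_ hv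
    rintro _ ⟨i, hi : 1 - κ ≤ s i ∧ s i ≤ 1 + κ, rfl⟩
    change (_ * _) *ᵥ V.col i = V.col i
    rw [Matrix.conjTranspose_mul_self_svd hU,
      Matrix.unitary_mul_diagonal_mul_conjTranspose_mulVec_col hV, Pi.mul_apply, Pi.star_apply,
      if_pos hi, star_one, one_mul, one_smul]

/-- Rounding singular values near `1` to exactly `1`: if `Wt = U Σ V†` and `W = U Σ' V†` where
`Σ'` replaces every singular value in `[1−κ, 1+κ]` by `1`, then `‖W − Wt‖∞ ≤ κ`, and
`W†W v = v` for every `v` in the span of the columns of `V` whose singular value lies in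
`[1−κ, 1+κ]`. -/
theorem round_singular_values (d : ℕ) (κ : ℝ) (hκ0 : 0 ≤ κ) (hκ1 : κ ≤ 1)
    (Wt U V : Matrix (Fin d) (Fin d) ℂ)
    (hU : U ∈ Matrix.unitaryGroup (Fin d) ℂ) (hV : V ∈ Matrix.unitaryGroup (Fin d) ℂ)
    (s : Fin d → ℝ) (hs : ∀ i, 0 ≤ s i)
    (hSVD : Wt = U * Matrix.diagonal (fun i => (s i : ℂ)) * Vᴴ)
    (W : Matrix (Fin d) (Fin d) ℂ)
    (hW : W = U * Matrix.diagonal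
      (fun i => if 1 - κ ≤ s i ∧ s i ≤ 1 + κ then (1 : ℂ) else (s i : ℂ)) * Vᴴ) :
    opNorm (W - Wt) ≤ κ ∧
      ∀ v ∈ Submodule.span ℂ
          ((fun i : Fin d => (fun j : Fin d => V j i)) '' {i | 1 - κ ≤ s i ∧ s i ≤ 1 + κ}),
        (Wᴴ * W) *ᵥ v = v :=
  round_singular_values_general d κ hκ0 Wt U V hU hV s hSVD W hW
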